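/- (VectorAdam is rotation equivariant over any number of steps.) Let n ≥ 1, let f : ℝⁿ → ℝ be differentiable and rotation invariant, and fix α > 0, β₁, β₂ ∈ [0,1), ε > 0. For each timestep t ≥ 1, let S_t denote the VectorAdam step on (θ, m, v): g = ∇f(θ); m ← β₁m + (1−β₁)g; v ← β₂v + (1−β₂)‖g‖²₂; θ ← θ − α·(m/(1−β₁ᵗ))/(√(v/(1−β₂ᵗ)) + ε). Starting from initial state (θ₀, 0, 0), let (θ_T, m_T, v_T) be the state after applying S₁, S₂, …, S_T in order; and for a rotation R ∈ SO(n) let (θ'_T, m'_T, v'_T) be the state after applying the same T steps starting from (Rθ₀, 0, 0). Then for every T ≥ 0, θ'_T = Rθ_T, m'_T = Rm_T, and v'_T = v_T. -/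

import Mathlib

/-!
Rotation invariance of `f` makes its gradient equivariant, `∇f(Rx) = R ∇f(x)` (chain rule for
`f ∘ R = f`, with `R⁻¹ = Rᵀ`). A VectorAdam step only combines `θ`, `m` and `∇f(θ)` linearly and
uses `‖∇f(θ)‖`, which `R` preserves, so the step commutes with `(θ, m, v) ↦ (Rθ, Rm, v)`;
induction on the number of steps finishes the argument.
-/

/-- One VectorAdam step on the state `(θ, m, v)` at timestep `t`:
`g = ∇f(θ)`, `m* = β₁m + (1−β₁)g`, `v* = β₂v + (1−β₂)‖g‖²`,
`m̂ = m*/(1−β₁ᵗ)`, `v̂ = v*/(1−β₂ᵗ)`, `θ* = θ − α·m̂/(√v̂ + ε)`. -/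
noncomputable def vectorAdamStep (n : ℕ) (f : EuclideanSpace ℝ (Fin n) → ℝ)
    (α β₁ β₂ ε : ℝ) (t : ℕ)
    (s : EuclideanSpace ℝ (Fin n) × EuclideanSpace ℝ (Fin n) × ℝ) :
    EuclideanSpace ℝ (Fin n) × EuclideanSpace ℝ (Fin n) × ℝ :=
  let g := gradient f s.1
  let mStar := β₁ • s.2.1 + (1 - β₁) • g
  let vStar := β₂ * s.2.2 + (1 - β₂) * ‖g‖ ^ 2
  let mHat := (1 - β₁ ^ t)⁻¹ • mStar
  let vHat := vStar / (1 - β₂ ^ t)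
  (s.1 - (α / (Real.sqrt vHat + ε)) • mHat, mStar, vStar)

/-- The VectorAdam state after `T` steps `S₁, S₂, …, S_T`, starting from the
zero-initialized moments state `(θ₀, 0, 0)`. -/
noncomputable def vectorAdamIter (n : ℕ) (f : EuclideanSpace ℝ (Fin n) → ℝ)
    (α β₁ β₂ ε : ℝ) (θ₀ : EuclideanSpace ℝ (Fin n)) :
    ℕ → EuclideanSpace ℝ (Fin n) × EuclideanSpace ℝ (Fin n) × ℝ
  | 0 => (θ₀, 0, 0)
  | T + 1 => vectorAdamStep n f α β₁ β₂ ε (T + 1) (vectorAdamIter n f α β₁ β₂ ε θ₀ T)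

section Gradient

open RealInnerProductSpace

theorem gradient_comp_linearIsometryEquiv {E F : Type*}
    [NormedAddCommGroup E] [InnerProductSpace ℝ E] [CompleteSpace E]
    [NormedAddCommGroup F] [InnerProductSpace ℝ F] [CompleteSpace F]
    (f : F → ℝ) (R : E ≃ₗᵢ[ℝ] F) (x : E) :
    gradient (f ∘ R) x = R.symm (gradient f (R x)) := by
  refine ext_inner_right ℝ fun y => ?_
  calc ⟪gradient (f ∘ R) x, y⟫ = fderiv ℝ f (R x) (R y) := by
        rw [inner_gradient_left, ← R.coe_toContinuousLinearEquiv,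
          ContinuousLinearEquiv.comp_right_fderiv]
        rfl
    _ = ⟪R.symm (gradient f (R x)), y⟫ := by
        rw [← inner_gradient_left, ← R.symm.inner_map_map, R.symm_apply_apply]

theorem gradient_map_of_invariant {E : Type*}
    [NormedAddCommGroup E] [InnerProductSpace ℝ E] [CompleteSpace E]
    {f : E → ℝ} {R : E ≃ₗᵢ[ℝ] E} (hfR : ∀ x, f (R x) = f x) (x : E) :
    gradient f (R x) = R (gradient f x) := by
  have hcomp : f ∘ R = f := funext hfR
  rw [← R.apply_symm_apply (gradient f (R x)), ← gradient_comp_linearIsometryEquiv, hcomp]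

end Gradient

section VectorAdam

variable {n : ℕ} {f : EuclideanSpace ℝ (Fin n) → ℝ} {α β₁ β₂ ε : ℝ}
  {R : EuclideanSpace ℝ (Fin n) ≃ₗᵢ[ℝ] EuclideanSpace ℝ (Fin n)}

theorem vectorAdamStep_map (hfR : ∀ x, f (R x) = f x) (t : ℕ)
    (s : EuclideanSpace ℝ (Fin n) × EuclideanSpace ℝ (Fin n) × ℝ) :
    vectorAdamStep n f α β₁ β₂ ε t (Prod.map R (Prod.map R id) s) =
      Prod.map R (Prod.map R id) (vectorAdamStep n f α β₁ β₂ ε t s) := by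
  simp only [vectorAdamStep, Prod.map_apply, Prod.map_fst, Prod.map_snd, id,
    gradient_map_of_invariant hfR, R.norm_map, map_add, map_smul, map_sub]

theorem vectorAdamIter_map (hfR : ∀ x, f (R x) = f x) (θ₀ : EuclideanSpace ℝ (Fin n)) (T : ℕ) :
    vectorAdamIter n f α β₁ β₂ ε (R θ₀) T =
      Prod.map R (Prod.map R id) (vectorAdamIter n f α β₁ β₂ ε θ₀ T) := by
  induction T with
  | zero => simp [vectorAdamIter]
  | succ T ih => rw [vectorAdamIter, vectorAdamIter, ih, vectorAdamStep_map hfR]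

end VectorAdam

theorem vectorAdam_rotation_equivariant_general
    (n : ℕ)
    (f : EuclideanSpace ℝ (Fin n) → ℝ)
    (hinv : ∀ (R : EuclideanSpace ℝ (Fin n) ≃ₗᵢ[ℝ] EuclideanSpace ℝ (Fin n)),
      LinearMap.det R.toLinearEquiv.toLinearMap = 1 →
      ∀ x : EuclideanSpace ℝ (Fin n), f (R x) = f x)
    (α β₁ β₂ ε : ℝ)
    (R : EuclideanSpace ℝ (Fin n) ≃ₗᵢ[ℝ] EuclideanSpace ℝ (Fin n))
    (hR : LinearMap.det R.toLinearEquiv.toLinearMap = 1)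
    (θ₀ : EuclideanSpace ℝ (Fin n)) :
    ∀ T : ℕ,
      (vectorAdamIter n f α β₁ β₂ ε (R θ₀) T).1 =
        R (vectorAdamIter n f α β₁ β₂ ε θ₀ T).1 ∧
      (vectorAdamIter n f α β₁ β₂ ε (R θ₀) T).2.1 =
        R (vectorAdamIter n f α β₁ β₂ ε θ₀ T).2.1 ∧
      (vectorAdamIter n f α β₁ β₂ ε (R θ₀) T).2.2 =
        (vectorAdamIter n f α β₁ β₂ ε θ₀ T).2.2 := by
  intro T
  rw [vectorAdamIter_map (hinv R hR)]
  exact ⟨rfl, rfl, rfl⟩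

/-- VectorAdam is rotation equivariant over any number of steps: starting from
`(Rθ₀, 0, 0)` instead of `(θ₀, 0, 0)`, after `T` steps the parameter and first
moment are rotated by `R`, and the second moment is unchanged. -/
theorem vectorAdam_rotation_equivariant
    (n : ℕ) (hn : 1 ≤ n)
    (f : EuclideanSpace ℝ (Fin n) → ℝ) (hf : Differentiable ℝ f)
    (hinv : ∀ (R : EuclideanSpace ℝ (Fin n) ≃ₗᵢ[ℝ] EuclideanSpace ℝ (Fin n)),
      LinearMap.det R.toLinearEquiv.toLinearMap = 1 →
      ∀ x : EuclideanSpace ℝ (Fin n), f (R x) = f x)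
    (α β₁ β₂ ε : ℝ) (hα : 0 < α)
    (hβ₁ : β₁ ∈ Set.Ico (0 : ℝ) 1) (hβ₂ : β₂ ∈ Set.Ico (0 : ℝ) 1) (hε : 0 < ε)
    (R : EuclideanSpace ℝ (Fin n) ≃ₗᵢ[ℝ] EuclideanSpace ℝ (Fin n))
    (hR : LinearMap.det R.toLinearEquiv.toLinearMap = 1)
    (θ₀ : EuclideanSpace ℝ (Fin n)) :
    ∀ T : ℕ,
      (vectorAdamIter n f α β₁ β₂ ε (R θ₀) T).1 =
        R (vectorAdamIter n f α β₁ β₂ ε θ₀ T).1 ∧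
      (vectorAdamIter n f α β₁ β₂ ε (R θ₀) T).2.1 =
        R (vectorAdamIter n f α β₁ β₂ ε θ₀ T).2.1 ∧
      (vectorAdamIter n f α β₁ β₂ ε (R θ₀) T).2.2 =
        (vectorAdamIter n f α β₁ β₂ ε θ₀ T).2.2 :=
  vectorAdam_rotation_equivariant_general n f hinv α β₁ β₂ ε R hR θ₀
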